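/- For every m ≥ 0 and z ∈ ℝ, V_m(z) ≥ V_{m+1}(z), i.e., the family of potentials V_m is pointwise non-increasing in m. -/

import Mathlib

open MeasureTheory Real

/-- The potential `V_m(z) = ∫_0^∞ (tᵐ e^{-t}/m!) / √(2t/B + z²) dt`. -/
noncomputable def Vm (B : ℝ) (m : ℕ) (z : ℝ) : ℝ :=
  ∫ t in Set.Ioi (0 : ℝ), (t ^ m * Real.exp (-t) / (Nat.factorial m)) / Real.sqrt (2 * t / B + z ^ 2)

/-!
`V_m(z)` is the expectation of the decreasing function `f(t) = (2t/B + z²)^{-1/2}` under the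
Gamma(m + 1, 1) law with density `p_m(t) = tᵐ e^{-t}/m!`. Since
`p_{m+1}(t) = p_m(t) · t/(m + 1)`, the difference `p_m - p_{m+1}` has the sign of `m + 1 - t`,
as does `f(t) - f(m + 1)`. Both densities having total mass one,
`∫ (p_m - p_{m+1}) f = ∫ (p_m - p_{m+1}) (f - f(m + 1)) ≥ 0`.
-/

open Set
open scoped Nat

lemma integrableOn_pow_mul_exp_neg (n : ℕ) :
    IntegrableOn (fun t : ℝ => t ^ n * exp (-t)) (Ioi 0) := by
  refine (GammaIntegral_convergent (s := n + 1) (by positivity)).congr_fun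
    (fun t _ => ?_) measurableSet_Ioi
  simp only [add_sub_cancel_right, rpow_natCast, mul_comm]

lemma integral_pow_mul_exp_neg (n : ℕ) : ∫ t in Ioi (0 : ℝ), t ^ n * exp (-t) = n ! := by
  rw [← Gamma_nat_eq_factorial, Gamma_eq_integral (by positivity)]
  simp only [add_sub_cancel_right, rpow_natCast, mul_comm]

/-- The density of the Gamma(m + 1, 1) distribution on `(0, ∞)`. -/
noncomputable def gammaDensity (m : ℕ) (t : ℝ) : ℝ := t ^ m * exp (-t) / m !

lemma integrableOn_gammaDensity (m : ℕ) : IntegrableOn (gammaDensity m) (Ioi 0) :=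
  (integrableOn_pow_mul_exp_neg m).div_const _

lemma integral_gammaDensity (m : ℕ) : ∫ t in Ioi (0 : ℝ), gammaDensity m t = 1 := by
  simp only [gammaDensity, integral_div, integral_pow_mul_exp_neg]
  exact div_self (by positivity)

lemma gammaDensity_nonneg (m : ℕ) {t : ℝ} (ht : 0 ≤ t) : 0 ≤ gammaDensity m t := by
  unfold gammaDensity; positivity

lemma gammaDensity_succ (m : ℕ) (t : ℝ) :
    gammaDensity (m + 1) t = gammaDensity m t * (t / (m + 1)) := by
  simp only [gammaDensity, Nat.factorial_succ, Nat.cast_mul, Nat.cast_succ]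
  field_simp
  ring

lemma AntitoneOn.sub_mul_sub_nonneg {s : Set ℝ} {f : ℝ → ℝ} (hf : AntitoneOn f s)
    {a b : ℝ} (ha : a ∈ s) (hb : b ∈ s) : 0 ≤ (b - a) * (f a - f b) := by
  rcases le_total a b with hab | hba
  · exact mul_nonneg (sub_nonneg.2 hab) (sub_nonneg.2 (hf ha hb hab))
  · exact mul_nonneg_of_nonpos_of_nonpos (sub_nonpos.2 hba) (sub_nonpos.2 (hf hb ha hba))

theorem setIntegral_gammaDensity_succ_mul_le {f : ℝ → ℝ} (hf : AntitoneOn f (Ioi 0)) (m : ℕ)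
    (hm : IntegrableOn (fun t => gammaDensity m t * f t) (Ioi 0))
    (hm' : IntegrableOn (fun t => gammaDensity (m + 1) t * f t) (Ioi 0)) :
    ∫ t in Ioi 0, gammaDensity (m + 1) t * f t ≤ ∫ t in Ioi 0, gammaDensity m t * f t := by
  set c : ℝ := m + 1 with hc
  have hpoint : ∀ t ∈ Ioi (0 : ℝ), gammaDensity (m + 1) t * f t ≤
      gammaDensity m t * f t - (gammaDensity m t - gammaDensity (m + 1) t) * f c := by
    intro t ht
    have hcross := hf.sub_mul_sub_nonneg ht (mem_Ioi.2 (Nat.cast_add_one_pos m))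
    have hdiff : gammaDensity m t - gammaDensity (m + 1) t = gammaDensity m t / c * (c - t) := by
      rw [gammaDensity_succ, hc]; field_simp
    have : 0 ≤ (gammaDensity m t - gammaDensity (m + 1) t) * (f t - f c) := by
      rw [hdiff, mul_assoc]
      exact mul_nonneg (div_nonneg (gammaDensity_nonneg m (le_of_lt ht)) (by positivity)) hcross
    linarith
  have hdiffInt : IntegrableOn (fun t => (gammaDensity m t - gammaDensity (m + 1) t) * f c)
      (Ioi 0) := ((integrableOn_gammaDensity m).sub (integrableOn_gammaDensity (m + 1))).mul_const _
  calc ∫ t in Ioi 0, gammaDensity (m + 1) t * f t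
      ≤ ∫ t in Ioi 0,
          (gammaDensity m t * f t - (gammaDensity m t - gammaDensity (m + 1) t) * f c) :=
        setIntegral_mono_on hm' (hm.sub hdiffInt) measurableSet_Ioi hpoint
    _ = ∫ t in Ioi 0, gammaDensity m t * f t := by
        rw [integral_sub hm hdiffInt, integral_mul_const,
          integral_sub (integrableOn_gammaDensity m) (integrableOn_gammaDensity (m + 1)),
          integral_gammaDensity, integral_gammaDensity, sub_self, zero_mul, sub_zero]

section Potential

variable {B : ℝ} (z : ℝ)

lemma antitoneOn_inv_sqrt (hB : 0 < B) :
    AntitoneOn (fun t => (√(2 * t / B + z ^ 2))⁻¹) (Ioi 0) := by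
  intro a ha b _ hab
  have : 0 < 2 * a / B + z ^ 2 := by have := mem_Ioi.1 ha; positivity
  exact inv_anti₀ (sqrt_pos.2 this) (sqrt_le_sqrt (by gcongr))

lemma inv_sqrt_le_rpow (hB : 0 < B) {t : ℝ} (ht : 0 < t) :
    (√(2 * t / B + z ^ 2))⁻¹ ≤ √(B / 2) * t ^ (-(1 / 2) : ℝ) := calc
  (√(2 * t / B + z ^ 2))⁻¹ ≤ (√(2 * t / B))⁻¹ :=
      inv_anti₀ (sqrt_pos.2 (by positivity)) (sqrt_le_sqrt (by nlinarith [sq_nonneg z]))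
  _ = √(B / 2) * t ^ (-(1 / 2) : ℝ) := by
      rw [← sqrt_inv, show (2 * t / B)⁻¹ = B / 2 * t⁻¹ by field_simp,
        sqrt_mul (by positivity), sqrt_inv, rpow_neg ht.le, sqrt_eq_rpow t]

lemma integrableOn_gammaDensity_mul_inv_sqrt (hB : 0 < B) (m : ℕ) :
    IntegrableOn (fun t => gammaDensity m t * (√(2 * t / B + z ^ 2))⁻¹) (Ioi 0) := by
  have hdom : IntegrableOn
      (fun t : ℝ => √(B / 2) / m ! * (exp (-t) * t ^ ((m + 1 / 2 : ℝ) - 1))) (Ioi 0) :=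
    (GammaIntegral_convergent (by positivity)).const_mul _
  refine hdom.mono' (by unfold gammaDensity; fun_prop) ?_
  refine (ae_restrict_iff' measurableSet_Ioi).2 (Filter.Eventually.of_forall fun t ht => ?_)
  have ht : 0 < t := ht
  rw [norm_of_nonneg (mul_nonneg (gammaDensity_nonneg m ht.le) (by positivity))]
  calc gammaDensity m t * (√(2 * t / B + z ^ 2))⁻¹
      ≤ gammaDensity m t * (√(B / 2) * t ^ (-(1 / 2) : ℝ)) :=
        mul_le_mul_of_nonneg_left (inv_sqrt_le_rpow z hB ht) (gammaDensity_nonneg m ht.le)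
    _ = √(B / 2) / m ! * (exp (-t) * t ^ ((m + 1 / 2 : ℝ) - 1)) := by
        rw [show (m + 1 / 2 : ℝ) - 1 = m + -(1 / 2) by ring, rpow_add ht, rpow_natCast,
          gammaDensity]
        ring

end Potential

/-- `V_m(z) ≥ V_{m+1}(z)`, i.e. `V_m` is pointwise non-increasing in `m`. -/
theorem Vm_antitone (B : ℝ) (hB : 0 < B) (m : ℕ) (z : ℝ) :
    Vm B (m + 1) z ≤ Vm B m z := by
  simpa only [Vm, gammaDensity, div_eq_mul_inv] using
    setIntegral_gammaDensity_succ_mul_le (antitoneOn_inv_sqrt z hB) m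
      (integrableOn_gammaDensity_mul_inv_sqrt z hB m)
      (integrableOn_gammaDensity_mul_inv_sqrt z hB (m + 1))
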